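/- Let Φ be an irreducible reduced crystallographic simply-laced root system with base Δ and highest root θ, and let α ∈ Δ be an extreme Heisenberg root with neighbour β. Then there exists an element w of the subgroup W_{Δ∖{α}} of the Weyl group generated by the simple reflections in the other simple roots such that w² = 1 and w(α) = θ − α − β. (Heisenberg case of the paper's Lemma on the existence of an involution in the Weyl group of the Levi L_α sending α to δ_α = θ − α − β; under the stated hypotheses Φ is of type E_6, E_7 or E_8.) -/

import Mathlib

/-!
Since `θ` is orthogonal to every simple root other than `α` and `⟪θ, α⟫ = 1`, every root `ε`
satisfies `⟪ε, θ⟫ = c_α(ε)`. The key step is a root `ζ` with `c_α(ζ) = 1`, `⟪ζ, α⟫ = 0` and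
`⟪ζ, β⟫ = 1`: without one, the set `{θ, θ - α} ∪ {ε | c_α(ε) = 1, ⟪ε, α⟫ = 0}` would be stable
under all simple reflections, so the sum of its elements would be orthogonal to every simple root,
hence `0`, although all of its elements have positive `α`-coefficient. Then `μ = θ - ζ - α` and
`ν = ζ - β - α` are orthogonal roots with `α`-coefficient `0` and `⟪α, μ⟫ = ⟪α, ν⟫ = -1`, so
`w = s_μ s_ν` is an involution with `w(α) = α + μ + ν = θ - α - β`; it lies in `W_{Δ∖{α}}`
because the reflection in a positive root of `α`-coefficient `0` is conjugate, by a simple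
reflection `s_γ` with `γ ≠ α`, to the reflection in a root of smaller height.
-/

open scoped InnerProductSpace

namespace PaperRS

variable {E : Type*} [NormedAddCommGroup E] [InnerProductSpace ℝ E]

/-- A reduced crystallographic simply-laced root system, normalized so that every root has
squared length `2` (hence `⟪δ, ε⟫` is the Cartan integer `⟨δ, ε^∨⟩`). -/
structure IsRootSystem (Φ : Set E) : Prop where
  finite : Φ.Finite
  nonzero : (0 : E) ∉ Φ
  span_top : Submodule.span ℝ Φ = ⊤
  norm_two : ∀ α ∈ Φ, ⟪α, α⟫_ℝ = 2
  reduced : ∀ α ∈ Φ, ∀ t : ℝ, t • α ∈ Φ → t = 1 ∨ t = -1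
  cartan_int : ∀ α ∈ Φ, ∀ β ∈ Φ, ∃ n : ℤ, ⟪α, β⟫_ℝ = (n : ℝ)
  reflect_mem : ∀ α ∈ Φ, ∀ β ∈ Φ, β - ⟪β, α⟫_ℝ • α ∈ Φ

/-- Irreducibility: `Φ` is nonempty and cannot be split into two mutually orthogonal parts. -/
def IsIrreducible (Φ : Set E) : Prop :=
  Φ.Nonempty ∧ ∀ Φ₁ Φ₂ : Set E, Φ = Φ₁ ∪ Φ₂ →
    (∀ a ∈ Φ₁, ∀ b ∈ Φ₂, ⟪a, b⟫_ℝ = 0) → Φ₁ = ∅ ∨ Φ₂ = ∅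

/-- The reflection in (the hyperplane orthogonal to) a root `α` of squared length `2`. -/
def sRefl (α : E) : Function.End E := fun x => x - ⟪x, α⟫_ℝ • α

/-- The group generated by the reflections in the elements of `S`; since every reflection is
an involution, the submonoid generated by the reflections coincides with the generated group. -/
def genBy (S : Set E) : Submonoid (Function.End E) :=
  Submonoid.closure (sRefl '' S)

/-- The Weyl group of `Φ`: the group generated by the reflections in all the roots. -/
abbrev WeylGroup (Φ : Set E) : Submonoid (Function.End E) := genBy Φ

/-- A base (set of simple roots) of `Φ`, together with the (unique) integer coefficients
`coeff δ γ` of each root `δ` with respect to the simple roots. -/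
structure Base (Φ : Set E) where
  Δ : Finset E
  coeff : E → E → ℤ
  subset : ↑Δ ⊆ Φ
  indep : LinearIndependent ℝ (fun γ : {x : E // x ∈ Δ} => (γ : E))
  expand : ∀ δ ∈ Φ, δ = ∑ γ ∈ Δ, (coeff δ γ : ℝ) • γ
  sign : ∀ δ ∈ Φ, (∀ γ ∈ Δ, 0 ≤ coeff δ γ) ∨ (∀ γ ∈ Δ, coeff δ γ ≤ 0)

variable {Φ : Set E}

/-- `θ` is the highest root of `Φ` with respect to the base `B`. -/
def IsHighest (B : Base Φ) (θ : E) : Prop :=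
  θ ∈ Φ ∧ ∀ δ ∈ Φ, ∀ γ ∈ B.Δ, B.coeff δ γ ≤ B.coeff θ γ

/-- `α` is a Heisenberg simple root: the highest root `θ` has `α`-coefficient `2`, and every
root other than `±θ` has `α`-coefficient in `{-1, 0, 1}`. -/
def IsHeisenberg (B : Base Φ) (θ α : E) : Prop :=
  B.coeff θ α = 2 ∧
    ∀ δ ∈ Φ, δ ≠ θ → δ ≠ -θ →
      B.coeff δ α = -1 ∨ B.coeff δ α = 0 ∨ B.coeff δ α = 1

/-- `α` is an extreme simple root with (unique) neighbour `β`. -/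
def IsExtreme (B : Base Φ) (α β : E) : Prop :=
  β ∈ B.Δ ∧ β ≠ α ∧ ⟪α, β⟫_ℝ ≠ 0 ∧
    ∀ γ ∈ B.Δ, γ ≠ α → ⟪α, γ⟫_ℝ ≠ 0 → γ = β

/-- `Φ_α`: the roots with `α`-coefficient `1` that are orthogonal to `α`. -/
def PhiSet (B : Base Φ) (α : E) : Set E :=
  {ε ∈ Φ | B.coeff ε α = 1 ∧ ⟪ε, α⟫_ℝ = 0}

/-- `Ψ_α`: the roots `ε` with `α`-coefficient `1` and `⟪ε, α⟫ ≤ 0`. -/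
def PsiSet (B : Base Φ) (α : E) : Set E :=
  {ε ∈ Φ | B.coeff ε α = 1 ∧ ⟪ε, α⟫_ℝ ≤ 0}

namespace IsRootSystem

theorem neg_mem (hΦ : IsRootSystem Φ) {δ : E} (hδ : δ ∈ Φ) : -δ ∈ Φ := by
  have h := hΦ.reflect_mem δ hδ δ hδ
  rwa [hΦ.norm_two δ hδ, show δ - (2 : ℝ) • δ = -δ by module] at h

theorem add_mem (hΦ : IsRootSystem Φ) {δ ε : E} (hδ : δ ∈ Φ) (hε : ε ∈ Φ)
    (h : ⟪δ, ε⟫_ℝ = -1) : δ + ε ∈ Φ := by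
  have h' := hΦ.reflect_mem ε hε δ hδ
  rwa [h, show δ - (-1 : ℝ) • ε = δ + ε by module] at h'

theorem sub_mem (hΦ : IsRootSystem Φ) {δ ε : E} (hδ : δ ∈ Φ) (hε : ε ∈ Φ)
    (h : ⟪δ, ε⟫_ℝ = 1) : δ - ε ∈ Φ := by
  have h' := hΦ.reflect_mem ε hε δ hδ
  rwa [h, one_smul] at h'

theorem inner_eq_neg_one_or_zero_or_one (hΦ : IsRootSystem Φ) {δ ε : E} (hδ : δ ∈ Φ)
    (hε : ε ∈ Φ) (hne : δ ≠ ε) (hne' : δ ≠ -ε) :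
    ⟪δ, ε⟫_ℝ = -1 ∨ ⟪δ, ε⟫_ℝ = 0 ∨ ⟪δ, ε⟫_ℝ = 1 := by
  obtain ⟨n, hn⟩ := hΦ.cartan_int δ hδ ε hε
  have hδδ := hΦ.norm_two δ hδ
  have hεε := hΦ.norm_two ε hε
  have hεδ : ⟪ε, δ⟫_ℝ = n := by rw [real_inner_comm, hn]
  have hsq : n * n ≤ 4 := by
    have := real_inner_mul_inner_self_le δ ε
    rw [hn, hδδ, hεε] at this
    exact_mod_cast (by linarith : (n : ℝ) * n ≤ 4)
  have hn2 : n ≠ 2 := by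
    rintro rfl
    refine hne (sub_eq_zero.mp (inner_self_eq_zero (𝕜 := ℝ).mp ?_))
    rw [inner_sub_left, inner_sub_right, inner_sub_right, hδδ, hεε, hn, hεδ]
    norm_num
  have hn2' : n ≠ -2 := by
    rintro rfl
    refine hne' (eq_neg_of_add_eq_zero_left (inner_self_eq_zero (𝕜 := ℝ).mp ?_))
    rw [inner_add_left, inner_add_right, inner_add_right, hδδ, hεε, hn, hεδ]
    norm_num
  have : n = -1 ∨ n = 0 ∨ n = 1 := by
    have : -2 ≤ n := by nlinarith
    have : n ≤ 2 := by nlinarith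
    omega
  rcases this with rfl | rfl | rfl <;> simp [hn]

end IsRootSystem

theorem sRefl_apply (γ x : E) : sRefl γ x = x - ⟪x, γ⟫_ℝ • γ := rfl

theorem sRefl_of_inner_eq_zero {γ x : E} (h : ⟪x, γ⟫_ℝ = 0) : sRefl γ x = x := by
  simp [sRefl_apply, h]

theorem inner_sRefl (γ x y : E) : ⟪sRefl γ x, y⟫_ℝ = ⟪x, y⟫_ℝ - ⟪x, γ⟫_ℝ * ⟪γ, y⟫_ℝ := by
  rw [sRefl_apply, inner_sub_left, real_inner_smul_left]

theorem sRefl_neg (γ : E) : sRefl (-γ) = sRefl γ := by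
  funext x
  simp [sRefl_apply]

theorem sRefl_sRefl {γ : E} (hγ : ⟪γ, γ⟫_ℝ = 2) (x : E) : sRefl γ (sRefl γ x) = x := by
  rw [sRefl_apply, inner_sRefl, hγ, sRefl_apply]
  module

theorem sRefl_sRefl_eq_conj {γ : E} (hγ : ⟪γ, γ⟫_ℝ = 2) (x : E) :
    sRefl (sRefl γ x) = sRefl γ * sRefl x * sRefl γ := by
  funext y
  change _ = sRefl γ (sRefl x (sRefl γ y))
  simp only [sRefl_apply, inner_sub_left, inner_sub_right, real_inner_smul_left,
    real_inner_smul_right, hγ, real_inner_comm γ x]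
  module

theorem sRefl_mul_sRefl_apply {μ ν : E} (h : ⟪ν, μ⟫_ℝ = 0) (x : E) :
    (sRefl μ * sRefl ν) x = x - ⟪x, ν⟫_ℝ • ν - ⟪x, μ⟫_ℝ • μ := by
  change sRefl μ (sRefl ν x) = _
  rw [sRefl_apply, inner_sRefl, h, sRefl_apply]
  module

theorem sRefl_mul_sRefl_mul_self {μ ν : E} (hμ : ⟪μ, μ⟫_ℝ = 2) (hν : ⟪ν, ν⟫_ℝ = 2)
    (h : ⟪ν, μ⟫_ℝ = 0) : sRefl μ * sRefl ν * (sRefl μ * sRefl ν) = 1 := by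
  funext x
  change (sRefl μ * sRefl ν) ((sRefl μ * sRefl ν) x) = x
  have h' : ⟪μ, ν⟫_ℝ = 0 := by rw [real_inner_comm, h]
  simp only [sRefl_mul_sRefl_apply h, inner_sub_left, real_inner_smul_left, hμ, hν, h, h']
  module

namespace Base

variable (B : Base Φ)

noncomputable def basis (hΦ : IsRootSystem Φ) : Module.Basis B.Δ ℝ E :=
  Module.Basis.mk B.indep <| by
    rw [← hΦ.span_top, Submodule.span_le]
    intro δ hδ
    rw [B.expand δ hδ]
    refine Submodule.sum_mem _ fun γ hγ => Submodule.smul_mem _ _ (Submodule.subset_span ?_)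
    exact ⟨⟨γ, hγ⟩, rfl⟩

theorem basis_apply (hΦ : IsRootSystem Φ) (γ : B.Δ) : B.basis hΦ γ = γ :=
  Module.Basis.mk_apply _ _ _

theorem coeff_eq_coord (hΦ : IsRootSystem Φ) {δ γ : E} (hδ : δ ∈ Φ) (hγ : γ ∈ B.Δ) :
    (B.coeff δ γ : ℝ) = (B.basis hΦ).coord ⟨γ, hγ⟩ δ := by
  have hδ' : δ = ∑ i : B.Δ, (B.coeff δ i : ℝ) • B.basis hΦ i := by
    simp only [basis_apply]
    rw [Finset.sum_coe_sort B.Δ fun γ => (B.coeff δ γ : ℝ) • γ]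
    exact B.expand δ hδ
  rw [Module.Basis.coord_apply]
  conv_rhs => rw [hδ']
  rw [Module.Basis.repr_sum_self]

theorem coeff_add (hΦ : IsRootSystem Φ) {δ ε γ : E} (hδ : δ ∈ Φ) (hε : ε ∈ Φ)
    (hδε : δ + ε ∈ Φ) (hγ : γ ∈ B.Δ) :
    B.coeff (δ + ε) γ = B.coeff δ γ + B.coeff ε γ := by
  have h := B.coeff_eq_coord hΦ hδε hγ
  rw [map_add, ← B.coeff_eq_coord hΦ hδ hγ, ← B.coeff_eq_coord hΦ hε hγ] at h
  exact_mod_cast h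

theorem coeff_sub (hΦ : IsRootSystem Φ) {δ ε γ : E} (hδ : δ ∈ Φ) (hε : ε ∈ Φ)
    (hδε : δ - ε ∈ Φ) (hγ : γ ∈ B.Δ) :
    B.coeff (δ - ε) γ = B.coeff δ γ - B.coeff ε γ := by
  have h := B.coeff_eq_coord hΦ hδε hγ
  rw [map_sub, ← B.coeff_eq_coord hΦ hδ hγ, ← B.coeff_eq_coord hΦ hε hγ] at h
  exact_mod_cast h

theorem coeff_neg (hΦ : IsRootSystem Φ) {δ γ : E} (hδ : δ ∈ Φ) (hγ : γ ∈ B.Δ) :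
    B.coeff (-δ) γ = -B.coeff δ γ := by
  have h := B.coeff_eq_coord hΦ (hΦ.neg_mem hδ) hγ
  rw [map_neg, ← B.coeff_eq_coord hΦ hδ hγ] at h
  exact_mod_cast h

theorem coeff_self (hΦ : IsRootSystem Φ) {γ : E} (hγ : γ ∈ B.Δ) : B.coeff γ γ = 1 := by
  have h1 : (B.basis hΦ).coord ⟨γ, hγ⟩ (B.basis hΦ ⟨γ, hγ⟩) = 1 := by simp
  rw [basis_apply] at h1
  exact_mod_cast (B.coeff_eq_coord hΦ (B.subset hγ) hγ).trans h1

theorem coeff_of_ne (hΦ : IsRootSystem Φ) {γ γ' : E} (hγ : γ ∈ B.Δ) (hγ' : γ' ∈ B.Δ)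
    (hne : γ' ≠ γ) : B.coeff γ' γ = 0 := by
  have h1 : (B.basis hΦ).coord ⟨γ, hγ⟩ (B.basis hΦ ⟨γ', hγ'⟩) = 0 := by
    simp [Finsupp.single_eq_of_ne' (show (⟨γ', hγ'⟩ : B.Δ) ≠ ⟨γ, hγ⟩ by simpa using hne)]
  rw [basis_apply] at h1
  exact_mod_cast (B.coeff_eq_coord hΦ (B.subset hγ') hγ).trans h1

theorem coeff_sRefl_of_ne (hΦ : IsRootSystem Φ) {γ α ε : E} (hγ : γ ∈ B.Δ) (hα : α ∈ B.Δ)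
    (hne : γ ≠ α) (hε : ε ∈ Φ) : B.coeff (sRefl γ ε) α = B.coeff ε α := by
  have h := B.coeff_eq_coord hΦ (hΦ.reflect_mem γ (B.subset hγ) ε hε) hα
  rw [sRefl_apply]
  rw [map_sub, map_smul, ← B.coeff_eq_coord hΦ hε hα,
    ← B.coeff_eq_coord hΦ (B.subset hγ) hα, B.coeff_of_ne hΦ hα hγ hne] at h
  exact_mod_cast (by simpa using h)

theorem inner_eq_sum {δ : E} (hδ : δ ∈ Φ) (v : E) :
    ⟪v, δ⟫_ℝ = ∑ γ ∈ B.Δ, (B.coeff δ γ : ℝ) * ⟪v, γ⟫_ℝ := by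
  conv_lhs => rw [B.expand δ hδ]
  simp only [inner_sum, real_inner_smul_right]

theorem inner_eq_neg_one_or_zero (hΦ : IsRootSystem Φ) {γ γ' : E} (hγ : γ ∈ B.Δ)
    (hγ' : γ' ∈ B.Δ) (hne : γ ≠ γ') : ⟪γ, γ'⟫_ℝ = -1 ∨ ⟪γ, γ'⟫_ℝ = 0 := by
  have hneg : γ ≠ -γ' := by
    intro h
    have := B.coeff_neg hΦ (B.subset hγ') hγ
    rw [← h, B.coeff_self hΦ hγ, B.coeff_of_ne hΦ hγ hγ' (Ne.symm hne)] at this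
    omega
  refine (hΦ.inner_eq_neg_one_or_zero_or_one (B.subset hγ) (B.subset hγ') hne hneg).imp_right
    fun h => h.resolve_right fun h1 => ?_
  -- `γ - γ'` would be a root with coefficients `1` and `-1`
  have hsub := hΦ.sub_mem (B.subset hγ) (B.subset hγ') h1
  have hc := B.coeff_sub hΦ (B.subset hγ) (B.subset hγ') hsub hγ
  have hc' := B.coeff_sub hΦ (B.subset hγ) (B.subset hγ') hsub hγ'
  rw [B.coeff_self hΦ hγ, B.coeff_of_ne hΦ hγ hγ' (Ne.symm hne)] at hc
  rw [B.coeff_self hΦ hγ', B.coeff_of_ne hΦ hγ' hγ hne] at hc'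
  rcases B.sign _ hsub with h | h
  · linarith [h γ' hγ']
  · linarith [h γ hγ]

theorem sum_eq_zero_of_sRefl_mem (hΦ : IsRootSystem Φ) {S : Finset E}
    (hS : ∀ γ ∈ B.Δ, ∀ ε ∈ S, sRefl γ ε ∈ S) : ∑ ε ∈ S, ε = 0 := by
  refine InnerProductSpace.ext_inner_right_basis (B.basis hΦ) fun i => ?_
  obtain ⟨γ, hγ⟩ := i
  have hγ2 := hΦ.norm_two γ (B.subset hγ)
  have hγ0 : γ ≠ 0 := fun h => hΦ.nonzero (h ▸ B.subset hγ)
  have hperm : ∑ ε ∈ S, sRefl γ ε = ∑ ε ∈ S, ε :=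
    Finset.sum_nbij' (sRefl γ) (sRefl γ) (hS γ hγ) (hS γ hγ)
      (fun ε _ => sRefl_sRefl hγ2 ε) (fun ε _ => sRefl_sRefl hγ2 ε) fun _ _ => rfl
  simp only [sRefl_apply, Finset.sum_sub_distrib, ← Finset.sum_smul, sub_eq_self,
    smul_eq_zero, hγ0, or_false] at hperm
  rw [basis_apply, inner_zero_left, sum_inner, hperm]

theorem exists_coeff_nonpos_of_sRefl_mem (hΦ : IsRootSystem Φ) {α : E} (hα : α ∈ B.Δ)
    {S : Set E} (hSΦ : S ⊆ Φ) (hne : S.Nonempty) (hS : ∀ γ ∈ B.Δ, ∀ ε ∈ S, sRefl γ ε ∈ S) :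
    ∃ ε ∈ S, B.coeff ε α ≤ 0 := by
  by_contra! hpos
  have hfin := hΦ.finite.subset hSΦ
  have hsum := B.sum_eq_zero_of_sRefl_mem hΦ (S := hfin.toFinset) (by simpa using hS)
  have hcoeff : ∑ ε ∈ hfin.toFinset, (B.coeff ε α : ℝ) = 0 := by
    rw [Finset.sum_congr rfl fun ε hε => B.coeff_eq_coord hΦ (hSΦ (hfin.mem_toFinset.mp hε)) hα,
      ← map_sum, hsum, map_zero]
  have hlt : 0 < ∑ ε ∈ hfin.toFinset, (B.coeff ε α : ℝ) :=
    Finset.sum_pos (fun ε hε => by exact_mod_cast hpos ε (hfin.mem_toFinset.mp hε))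
      (by simpa using hne)
  linarith

theorem exists_coeff_pos_inner_pos (hΦ : IsRootSystem Φ) {η : E} (hη : η ∈ Φ)
    (hpos : ∀ γ ∈ B.Δ, 0 ≤ B.coeff η γ) : ∃ γ ∈ B.Δ, 0 < B.coeff η γ ∧ 0 < ⟪η, γ⟫_ℝ := by
  by_contra! h
  have : ⟪η, η⟫_ℝ ≤ 0 := by
    rw [B.inner_eq_sum hη η]
    refine Finset.sum_nonpos fun γ hγ => ?_
    rcases (hpos γ hγ).lt_or_eq with hlt | heq
    · exact mul_nonpos_of_nonneg_of_nonpos (by exact_mod_cast hlt.le) (h γ hγ hlt)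
    · simp [← heq]
  linarith [hΦ.norm_two η hη]

theorem coeff_sub_nonneg (hΦ : IsRootSystem Φ) {η γ : E} (hη : η ∈ Φ)
    (hpos : ∀ γ' ∈ B.Δ, 0 ≤ B.coeff η γ') (hγ : γ ∈ B.Δ) (h : ⟪η, γ⟫_ℝ = 1) :
    ∀ γ' ∈ B.Δ, 0 ≤ B.coeff (η - γ) γ' := by
  have hsub := hΦ.sub_mem hη (B.subset hγ) h
  have hc : ∀ γ' ∈ B.Δ, γ' ≠ γ → B.coeff (η - γ) γ' = B.coeff η γ' := fun γ' hγ' hne => by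
    rw [B.coeff_sub hΦ hη (B.subset hγ) hsub hγ', B.coeff_of_ne hΦ hγ' hγ hne.symm, sub_zero]
  refine (B.sign _ hsub).resolve_right fun hneg => ?_
  -- otherwise `η` is an integer multiple of `γ`, and `⟪η, γ⟫` would be even
  have hη' : ⟪γ, η⟫_ℝ = B.coeff η γ * 2 := by
    rw [B.inner_eq_sum hη, Finset.sum_eq_single_of_mem γ hγ fun γ' hγ' hne => ?_,
      hΦ.norm_two γ (B.subset hγ)]
    have : B.coeff η γ' = 0 := le_antisymm (hc γ' hγ' hne ▸ hneg γ' hγ') (hpos γ' hγ')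
    simp [this]
  rw [real_inner_comm, h] at hη'
  have : (1 : ℤ) = B.coeff η γ * 2 := by exact_mod_cast hη'
  omega

def height (η : E) : ℤ := ∑ γ ∈ B.Δ, B.coeff η γ

theorem sRefl_mem_genBy_of_coeff_eq_zero_of_nonneg (hΦ : IsRootSystem Φ) {α η : E}
    (hα : α ∈ B.Δ) (hη : η ∈ Φ) (hpos : ∀ γ ∈ B.Δ, 0 ≤ B.coeff η γ) (h0 : B.coeff η α = 0) :
    sRefl η ∈ genBy ((↑B.Δ : Set E) \ {α}) := by
  obtain ⟨n, hn⟩ : ∃ n : ℕ, B.height η = n :=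
    ⟨_, (Int.toNat_of_nonneg (Finset.sum_nonneg hpos)).symm⟩
  induction n using Nat.strong_induction_on generalizing η with
  | _ n ih =>
    obtain ⟨γ, hγ, hcγ, hip⟩ := B.exists_coeff_pos_inner_pos hΦ hη hpos
    have hγα : γ ≠ α := by rintro rfl; exact hcγ.ne' h0
    have hsγ : sRefl γ ∈ genBy ((↑B.Δ : Set E) \ {α}) :=
      Submonoid.subset_closure ⟨γ, ⟨hγ, hγα⟩, rfl⟩
    by_cases hηγ : η = γ
    · rwa [hηγ]
    have hγ2 := hΦ.norm_two γ (B.subset hγ)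
    have h1 : ⟪η, γ⟫_ℝ = 1 := by
      have hηγ' : η ≠ -γ := by rintro rfl; rw [inner_neg_left, hγ2] at hip; linarith
      rcases hΦ.inner_eq_neg_one_or_zero_or_one hη (B.subset hγ) hηγ hηγ' with h | h | h <;>
        first | exact h | linarith
    have hsub := hΦ.sub_mem hη (B.subset hγ) h1
    have hn1 : 1 ≤ n := by
      have := Finset.single_le_sum hpos hγ
      rw [height] at hn
      omega
    have hheight : B.height (η - γ) = ((n - 1 : ℕ) : ℤ) := by
      rw [height, Finset.sum_congr rfl fun γ' hγ' => B.coeff_sub hΦ hη (B.subset hγ) hsub hγ',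
        Finset.sum_sub_distrib, ← height, hn, Finset.sum_eq_single_of_mem γ hγ fun γ' hγ' hne =>
          B.coeff_of_ne hΦ hγ' hγ hne.symm, B.coeff_self hΦ hγ]
      omega
    have hrefl : sRefl η = sRefl γ * sRefl (η - γ) * sRefl γ := by
      rw [← sRefl_sRefl_eq_conj hγ2, sRefl_apply, inner_sub_left, h1, hγ2]
      congr 1
      module
    have hc : B.coeff (η - γ) α = 0 := by
      rw [B.coeff_sub hΦ hη (B.subset hγ) hsub hα, h0, B.coeff_of_ne hΦ hα hγ hγα, sub_zero]
    rw [hrefl]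
    exact Submonoid.mul_mem _ (Submonoid.mul_mem _ hsγ (ih (n - 1) (by omega) hsub
      (B.coeff_sub_nonneg hΦ hη hpos hγ h1) hc hheight)) hsγ

theorem sRefl_mem_genBy_of_coeff_eq_zero (hΦ : IsRootSystem Φ) {α η : E} (hα : α ∈ B.Δ)
    (hη : η ∈ Φ) (h0 : B.coeff η α = 0) : sRefl η ∈ genBy ((↑B.Δ : Set E) \ {α}) := by
  rcases B.sign η hη with hpos | hneg
  · exact B.sRefl_mem_genBy_of_coeff_eq_zero_of_nonneg hΦ hα hη hpos h0
  · rw [← sRefl_neg]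
    refine B.sRefl_mem_genBy_of_coeff_eq_zero_of_nonneg hΦ hα (hΦ.neg_mem hη) (fun γ hγ => ?_)
      (by rw [B.coeff_neg hΦ hη hα, h0, neg_zero])
    rw [B.coeff_neg hΦ hη hγ]
    linarith [hneg γ hγ]

end Base
section Heisenberg

variable {B : Base Φ} {θ α β : E}

theorem IsExtreme.inner_eq_neg_one (hΦ : IsRootSystem Φ) (hα : α ∈ B.Δ)
    (hext : IsExtreme B α β) : ⟪α, β⟫_ℝ = -1 :=
  (B.inner_eq_neg_one_or_zero hΦ hα hext.1 hext.2.1.symm).resolve_right hext.2.2.1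

theorem IsExtreme.inner_eq_zero (hext : IsExtreme B α β) {γ : E} (hγ : γ ∈ B.Δ)
    (hγα : γ ≠ α) (hγβ : γ ≠ β) : ⟪γ, α⟫_ℝ = 0 := by
  rw [real_inner_comm]
  by_contra h
  exact hγβ (hext.2.2.2 γ hγ hγα h)

namespace IsHeisenberg

theorem eq_of_coeff_eq_two (hΦ : IsRootSystem Φ) (hθ : IsHighest B θ) (hα : α ∈ B.Δ)
    (hH : IsHeisenberg B θ α) {ε : E} (hε : ε ∈ Φ) (h : B.coeff ε α = 2) : ε = θ := by
  by_contra hne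
  by_cases hneg : ε = -θ
  · have := B.coeff_neg hΦ hθ.1 hα
    rw [← hneg, h, hH.1] at this
    omega
  · rcases hH.2 ε hε hne hneg with h' | h' | h' <;> omega

theorem inner_highest_eq_zero (hΦ : IsRootSystem Φ) (hθ : IsHighest B θ) (hα : α ∈ B.Δ)
    (hH : IsHeisenberg B θ α) {γ : E} (hγ : γ ∈ B.Δ) (hne : γ ≠ α) : ⟪θ, γ⟫_ℝ = 0 := by
  have hθΦ := hθ.1
  have hγΦ := B.subset hγ
  have hcγ : B.coeff γ α = 0 := B.coeff_of_ne hΦ hα hγ hne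
  have h₁ : θ ≠ γ := by
    rintro rfl
    rw [hH.1] at hcγ
    omega
  have h₂ : θ ≠ -γ := by
    intro h
    have := B.coeff_neg hΦ hγΦ hα
    rw [← h, hH.1, hcγ] at this
    omega
  rcases hΦ.inner_eq_neg_one_or_zero_or_one hθΦ hγΦ h₁ h₂ with h | h | h
  · have hadd := hΦ.add_mem hθΦ hγΦ h
    have := hθ.2 _ hadd γ hγ
    rw [B.coeff_add hΦ hθΦ hγΦ hadd hγ, B.coeff_self hΦ hγ] at this
    omega
  · exact h
  · have hsub := hΦ.sub_mem hθΦ hγΦ h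
    have := hH.eq_of_coeff_eq_two hΦ hθ hα hsub
      (by rw [B.coeff_sub hΦ hθΦ hγΦ hsub hα, hH.1, hcγ, sub_zero])
    exact (hΦ.nonzero (sub_eq_self.mp this ▸ hγΦ)).elim

theorem inner_highest (hΦ : IsRootSystem Φ) (hθ : IsHighest B θ) (hα : α ∈ B.Δ)
    (hH : IsHeisenberg B θ α) {ε : E} (hε : ε ∈ Φ) : ⟪ε, θ⟫_ℝ = B.coeff ε α := by
  have key : ∀ δ ∈ Φ, ⟪θ, δ⟫_ℝ = B.coeff δ α * ⟪θ, α⟫_ℝ := fun δ hδ => by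
    rw [B.inner_eq_sum hδ, Finset.sum_eq_single_of_mem α hα fun γ hγ hne => by
      rw [hH.inner_highest_eq_zero hΦ hθ hα hγ hne, mul_zero]]
  have hθα : ⟪θ, α⟫_ℝ = 1 := by
    have := key θ hθ.1
    rw [hΦ.norm_two θ hθ.1, hH.1] at this
    push_cast at this
    linarith
  rw [real_inner_comm, key ε hε, hθα, mul_one]

theorem inner_highest_eq_one (hΦ : IsRootSystem Φ) (hθ : IsHighest B θ) (hα : α ∈ B.Δ)
    (hH : IsHeisenberg B θ α) : ⟪θ, α⟫_ℝ = 1 := by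
  rw [real_inner_comm, hH.inner_highest hΦ hθ hα (B.subset hα), B.coeff_self hΦ hα, Int.cast_one]

theorem eq_sub_of_inner_eq_neg_one (hΦ : IsRootSystem Φ) (hθ : IsHighest B θ)
    (hα : α ∈ B.Δ) (hH : IsHeisenberg B θ α) {ε : E} (hε : ε ∈ Φ) (hc : B.coeff ε α = 1)
    (h : ⟪ε, α⟫_ℝ = -1) : ε = θ - α := by
  have hadd := hΦ.add_mem hε (B.subset hα) h
  refine eq_sub_of_add_eq (hH.eq_of_coeff_eq_two hΦ hθ hα hadd ?_)
  rw [B.coeff_add hΦ hε (B.subset hα) hadd hα, hc, B.coeff_self hΦ hα]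
  rfl

theorem sRefl_eq_sub_or_inner_eq_zero (hΦ : IsRootSystem Φ) (hθ : IsHighest B θ)
    (hα : α ∈ B.Δ) (hext : IsExtreme B α β) (hH : IsHeisenberg B θ α)
    (hno : ∀ ζ ∈ Φ, B.coeff ζ α = 1 → ⟪ζ, α⟫_ℝ = 0 → ⟪ζ, β⟫_ℝ ≠ 1)
    {ε γ : E} (hε : ε ∈ Φ) (hc : B.coeff ε α = 1) (ha : ⟪ε, α⟫_ℝ = 0) (hγ : γ ∈ B.Δ) :
    sRefl γ ε = θ - α ∨ (B.coeff (sRefl γ ε) α = 1 ∧ ⟪sRefl γ ε, α⟫_ℝ = 0) := by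
  by_cases hγα : γ = α
  · rw [hγα, sRefl_of_inner_eq_zero ha]
    exact Or.inr ⟨hc, ha⟩
  have hc' : B.coeff (sRefl γ ε) α = 1 := by rw [B.coeff_sRefl_of_ne hΦ hγ hα hγα hε, hc]
  by_cases hγβ : γ = β
  · subst hγβ
    have hβΦ := B.subset hγ
    have hcβ := B.coeff_of_ne hΦ hα hγ hγα
    have h₁ : ε ≠ γ := by rintro rfl; omega
    have h₂ : ε ≠ -γ := by rintro rfl; rw [B.coeff_neg hΦ hβΦ hα, hcβ] at hc; omega
    rcases hΦ.inner_eq_neg_one_or_zero_or_one hε hβΦ h₁ h₂ with h | h | h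
    · have hsum : sRefl γ ε = ε + γ := by rw [sRefl_apply, h]; module
      refine Or.inl (hsum ▸ hH.eq_sub_of_inner_eq_neg_one hΦ hθ hα
        (hsum ▸ hΦ.reflect_mem γ hβΦ ε hε) (hsum ▸ hc') ?_)
      rw [inner_add_left, ha, real_inner_comm, hext.inner_eq_neg_one hΦ hα, zero_add]
    · rw [sRefl_of_inner_eq_zero h]
      exact Or.inr ⟨hc, ha⟩
    · exact absurd h (hno ε hε hc ha)
  · refine Or.inr ⟨hc', ?_⟩
    rw [inner_sRefl, ha, hext.inner_eq_zero hγ hγα hγβ, mul_zero, sub_zero]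

theorem sRefl_highest (hΦ : IsRootSystem Φ) (hθ : IsHighest B θ) (hα : α ∈ B.Δ)
    (hH : IsHeisenberg B θ α) {γ : E} (hγ : γ ∈ B.Δ) :
    sRefl γ θ = θ ∨ sRefl γ θ = θ - α := by
  by_cases hγα : γ = α
  · rw [hγα, sRefl_apply, hH.inner_highest_eq_one hΦ hθ hα, one_smul]
    exact Or.inr rfl
  · exact Or.inl (sRefl_of_inner_eq_zero (hH.inner_highest_eq_zero hΦ hθ hα hγ hγα))

theorem sRefl_highest_sub (hΦ : IsRootSystem Φ) (hθ : IsHighest B θ) (hα : α ∈ B.Δ)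
    (hext : IsExtreme B α β) (hH : IsHeisenberg B θ α) {γ : E} (hγ : γ ∈ B.Δ) :
    sRefl γ (θ - α) = θ ∨ sRefl γ (θ - α) = θ - α ∨
      (B.coeff (sRefl γ (θ - α)) α = 1 ∧ ⟪sRefl γ (θ - α), α⟫_ℝ = 0) := by
  have hθΦ := hθ.1
  have hα2 := hΦ.norm_two α (B.subset hα)
  have hθα := hH.inner_highest_eq_one hΦ hθ hα
  by_cases hγα : γ = α
  · rw [hγα, sRefl_apply, inner_sub_left, hθα, hα2]
    exact Or.inl (by module)
  by_cases hγβ : γ = β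
  · subst hγβ
    have hθαΦ := hΦ.sub_mem hθΦ (B.subset hα) hθα
    have hαγ := hext.inner_eq_neg_one hΦ hα
    have hδ : sRefl γ (θ - α) = θ - α - γ := by
      rw [sRefl_apply, inner_sub_left, hH.inner_highest_eq_zero hΦ hθ hα hγ hγα, hαγ]
      module
    have hδΦ : θ - α - γ ∈ Φ := hδ ▸ hΦ.reflect_mem γ (B.subset hγ) (θ - α) hθαΦ
    rw [hδ]
    refine Or.inr (Or.inr ⟨?_, ?_⟩)
    · rw [B.coeff_sub hΦ hθαΦ (B.subset hγ) hδΦ hα, B.coeff_sub hΦ hθΦ (B.subset hα) hθαΦ hα,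
        hH.1, B.coeff_self hΦ hα, B.coeff_of_ne hΦ hα hγ hγα]
      rfl
    · rw [inner_sub_left, inner_sub_left, hθα, hα2, real_inner_comm, hαγ]
      norm_num
  · rw [sRefl_of_inner_eq_zero (by rw [inner_sub_left, hH.inner_highest_eq_zero hΦ hθ hα hγ hγα,
      real_inner_comm, hext.inner_eq_zero hγ hγα hγβ, sub_zero])]
    exact Or.inr (Or.inl rfl)

theorem exists_root_inner_eq_zero_inner_eq_one (hΦ : IsRootSystem Φ) (hθ : IsHighest B θ)
    (hα : α ∈ B.Δ) (hext : IsExtreme B α β) (hH : IsHeisenberg B θ α) :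
    ∃ ζ ∈ Φ, B.coeff ζ α = 1 ∧ ⟪ζ, α⟫_ℝ = 0 ∧ ⟪ζ, β⟫_ℝ = 1 := by
  by_contra! hno
  let S : Set E := {ε ∈ Φ | ε = θ ∨ ε = θ - α ∨ (B.coeff ε α = 1 ∧ ⟪ε, α⟫_ℝ = 0)}
  have hstab : ∀ γ ∈ B.Δ, ∀ ε ∈ S, sRefl γ ε ∈ S := by
    rintro γ hγ ε ⟨hε, hS⟩
    refine ⟨hΦ.reflect_mem γ (B.subset hγ) ε hε, ?_⟩
    rcases hS with rfl | rfl | ⟨hc, ha⟩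
    · exact (hH.sRefl_highest hΦ hθ hα hγ).imp_right Or.inl
    · exact hH.sRefl_highest_sub hΦ hθ hα hext hγ
    · exact Or.inr (hH.sRefl_eq_sub_or_inner_eq_zero hΦ hθ hα hext hno hε hc ha hγ)
  obtain ⟨ε, ⟨-, hε⟩, hle⟩ :=
    B.exists_coeff_nonpos_of_sRefl_mem hΦ hα (Set.sep_subset _ _) ⟨θ, hθ.1, Or.inl rfl⟩ hstab
  have hθα := hH.inner_highest_eq_one hΦ hθ hα
  rcases hε with rfl | rfl | ⟨hc, -⟩
  · have := hH.1
    omega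
  · rw [B.coeff_sub hΦ hθ.1 (B.subset hα) (hΦ.sub_mem hθ.1 (B.subset hα) hθα) hα, hH.1,
      B.coeff_self hΦ hα] at hle
    omega
  · omega

theorem exists_orthogonal_roots (hΦ : IsRootSystem Φ) (hθ : IsHighest B θ) (hα : α ∈ B.Δ)
    (hext : IsExtreme B α β) (hH : IsHeisenberg B θ α) :
    ∃ μ ∈ Φ, ∃ ν ∈ Φ, B.coeff μ α = 0 ∧ B.coeff ν α = 0 ∧ ⟪ν, μ⟫_ℝ = 0 ∧
      ⟪α, μ⟫_ℝ = -1 ∧ ⟪α, ν⟫_ℝ = -1 ∧ α + μ + ν = θ - α - β := by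
  obtain ⟨ζ, hζ, hc, hζα, hζβ⟩ := hH.exists_root_inner_eq_zero_inner_eq_one hΦ hθ hα hext
  have hθΦ := hθ.1
  have hαΦ := B.subset hα
  have hβΦ := B.subset hext.1
  have hα2 := hΦ.norm_two α hαΦ
  have hζ2 := hΦ.norm_two ζ hζ
  have hαβ := hext.inner_eq_neg_one hΦ hα
  have hθα := hH.inner_highest_eq_one hΦ hθ hα
  have hθβ := hH.inner_highest_eq_zero hΦ hθ hα hext.1 hext.2.1
  have hζθ : ⟪ζ, θ⟫_ℝ = 1 := by rw [hH.inner_highest hΦ hθ hα hζ, hc, Int.cast_one]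
  have hζβΦ := hΦ.sub_mem hζ hβΦ hζβ
  have hν := hΦ.sub_mem hζβΦ hαΦ (by rw [inner_sub_left, hζα, real_inner_comm, hαβ]; norm_num)
  have hθζΦ := hΦ.sub_mem hθΦ hζ (by rw [real_inner_comm, hζθ])
  have hμ := hΦ.sub_mem hθζΦ hαΦ (by rw [inner_sub_left, hθα, hζα, sub_zero])
  refine ⟨θ - ζ - α, hμ, ζ - β - α, hν, ?_, ?_, ?_, ?_, ?_, by abel⟩
  · rw [B.coeff_sub hΦ hθζΦ hαΦ hμ hα, B.coeff_sub hΦ hθΦ hζ hθζΦ hα, hH.1, hc,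
      B.coeff_self hΦ hα]
    rfl
  · rw [B.coeff_sub hΦ hζβΦ hαΦ hν hα, B.coeff_sub hΦ hζ hβΦ hζβΦ hα, hc,
      B.coeff_of_ne hΦ hα hext.1 hext.2.1, B.coeff_self hΦ hα]
    rfl
  · simp only [inner_sub_left, inner_sub_right]
    rw [real_inner_comm θ β, real_inner_comm θ α, real_inner_comm ζ β, real_inner_comm ζ α,
      real_inner_comm α β, hθβ, hθα, hζθ, hζ2, hζβ, hζα, hαβ, hα2]
    norm_num
  · rw [inner_sub_right, inner_sub_right, real_inner_comm θ α, real_inner_comm ζ α, hθα, hζα,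
      hα2]
    norm_num
  · rw [inner_sub_right, inner_sub_right, real_inner_comm ζ α, hζα, hαβ, hα2]
    norm_num

end IsHeisenberg

end Heisenberg

theorem exists_involution_conj_alpha_heisenberg_general
    (hΦ : IsRootSystem Φ) (B : Base Φ)
    {θ α β : E} (hθ : IsHighest B θ) (hα : α ∈ B.Δ)
    (hext : IsExtreme B α β) (hH : IsHeisenberg B θ α) :
    ∃ w ∈ genBy ((↑B.Δ : Set E) \ {α}), w * w = 1 ∧ w α = θ - α - β := by
  obtain ⟨μ, hμ, ν, hν, hμα, hνα, hνμ, hαμ, hαν, hsum⟩ :=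
    hH.exists_orthogonal_roots hΦ hθ hα hext
  refine ⟨sRefl μ * sRefl ν,
    Submonoid.mul_mem _ (B.sRefl_mem_genBy_of_coeff_eq_zero hΦ hα hμ hμα)
      (B.sRefl_mem_genBy_of_coeff_eq_zero hΦ hα hν hνα),
    sRefl_mul_sRefl_mul_self (hΦ.norm_two μ hμ) (hΦ.norm_two ν hν) hνμ, ?_⟩
  rw [sRefl_mul_sRefl_apply hνμ, hαμ, hαν, ← hsum]
  module

/-- For an extreme Heisenberg simple root `α` with neighbour `β`, there is an involution `w`
in the subgroup of the Weyl group generated by the simple reflections in the simple roots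
other than `α` with `w(α) = θ - α - β`. -/
theorem exists_involution_conj_alpha_heisenberg
    (hΦ : IsRootSystem Φ) (hirr : IsIrreducible Φ) (B : Base Φ)
    {θ α β : E} (hθ : IsHighest B θ) (hα : α ∈ B.Δ)
    (hext : IsExtreme B α β) (hH : IsHeisenberg B θ α) :
    ∃ w ∈ genBy ((↑B.Δ : Set E) \ {α}), w * w = 1 ∧ w α = θ - α - β :=
  exists_involution_conj_alpha_heisenberg_general hΦ B hθ hα hext hH

end PaperRS
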